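/- (Order-sorted counterexample) Consider sorts {0,1,2,3} with 1 ≽ 0, sort attachment x:0, y:2, f:0→2, g:2→2, h:1×0→2, e:0→1, i:2×2→3, c:1, a:3, b:3, and the TRS R = {f(x) → h(e(x),x), h(c,x) → g(f(x)), e(x) → x, i(y,y) → a, i(y,g(y)) → b}. Then R is confluent on order-sorted terms but not confluent on all terms: a ←* i(f(c),f(c)) →* b with a and b distinct normal forms. -/

import Mathlib

/-!
No function symbol has result sort 0, so an order-sorted term of sort 0 is a variable; in
particular the variable `x` of the rules `f(x) → h(e(x),x)` and `h(c,x) → g(f(x))` is only ever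
instantiated by variables, never by `c`. Define `nf` bottom-up, contracting at the root
`e(t) ↦ t`, `f(t) ↦ h(t,t)`, `h(c,t) ↦ g(h(t,t))` and the `i`-rules. Every term rewrites to its
`nf`, and a step from an order-sorted term preserves `nf` (and order-sortedness): the only rule
whose effect on `nf` depends on the instance is `f(x) → h(e(x),x)`, and it would change `nf`
only for `x := c`. Hence any two reducts of an order-sorted term `s` meet in `nf s`.
-/

/-- First-order terms over signature `F` and variables `V`. -/
inductive Tm (F V : Type) : Type
  | var : V → Tm F V
  | app : F → List (Tm F V) → Tm F V

namespace Tm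

variable {F V G : Type}

/-- Applying a substitution to a term. -/
def subst (σ : V → Tm F V) : Tm F V → Tm F V
  | var x => σ x
  | app f ts => app f (ts.attach.map (fun ⟨t, _⟩ => subst σ t))
  decreasing_by · simp only [Tm.app.sizeOf_spec]; have := List.sizeOf_lt_of_mem ‹_›; omega

/-- List of (occurrences of) variables of a term. -/
def vars : Tm F V → List V
  | var x => [x]
  | app _ ts => ts.attach.flatMap (fun ⟨t, _⟩ => vars t)
  decreasing_by · simp only [Tm.app.sizeOf_spec]; have := List.sizeOf_lt_of_mem ‹_›; omega

/-- Renaming the function symbols of a term. -/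
def mapF (g : F → G) : Tm F V → Tm G V
  | var x => var x
  | app f ts => app (g f) (ts.attach.map (fun ⟨t, _⟩ => mapF g t))
  decreasing_by · simp only [Tm.app.sizeOf_spec]; have := List.sizeOf_lt_of_mem ‹_›; omega

/-- The subterm at a position (a list of argument indices), if the position exists. -/
def sub : List Nat → Tm F V → Option (Tm F V)
  | [], t => some t
  | _ :: _, var _ => none
  | i :: p, app _ ts => ts[i]?.bind (sub p)

/-- Replacing the subterm at a position by another term. -/
def repl : List Nat → Tm F V → Tm F V → Tm F V
  | [], _, u => u
  | _ :: _, var x, _ => var x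
  | i :: p, app f ts, u =>
      app f (match ts[i]? with
             | some t => ts.set i (repl p t u)
             | none => ts)

end Tm

/-- A rewrite rule: a pair of terms. -/
structure Rule (F V : Type) where
  lhs : Tm F V
  rhs : Tm F V

/-- The usual variable conditions on a rewrite rule: the left-hand side is
not a variable and all variables of the right-hand side occur in the left-hand side. -/
def WfRule {F V : Type} (ρ : Rule F V) : Prop :=
  (∀ x, ρ.lhs ≠ .var x) ∧ ∀ x, x ∈ ρ.rhs.vars → x ∈ ρ.lhs.vars

/-- `s` rewrites to `t` at position `p` using rule `ρ`. -/
def StepAt {F V : Type} (p : List Nat) (ρ : Rule F V) (s t : Tm F V) : Prop :=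
  ∃ σ : V → Tm F V, Tm.sub p s = some (Tm.subst σ ρ.lhs) ∧ t = Tm.repl p s (Tm.subst σ ρ.rhs)

/-- The rewrite relation of a TRS (set of rules). -/
def Step {F V : Type} (R : Set (Rule F V)) (s t : Tm F V) : Prop :=
  ∃ ρ ∈ R, ∃ p, StepAt p ρ s t

/-- `l` matches `t`: some substitution instance of `l` equals `t`. -/
def Matches {F V : Type} (l t : Tm F V) : Prop :=
  ∃ σ : V → Tm F V, Tm.subst σ l = t

/-- Reflexive-transitive closure of rewriting. -/
abbrev Steps {F V : Type} (R : Set (Rule F V)) : Tm F V → Tm F V → Prop :=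
  Relation.ReflTransGen (Step R)

/-- Confluence on a set of terms. -/
def ConfluentOn {F V : Type} (R : Set (Rule F V)) (T : Set (Tm F V)) : Prop :=
  ∀ s ∈ T, ∀ t u, Steps R s t → Steps R s u → ∃ v, Steps R t v ∧ Steps R u v

/-- Confluence (on all terms). -/
def Confluent {F V : Type} (R : Set (Rule F V)) : Prop :=
  ConfluentOn R Set.univ

/-- A relation is terminating if it admits no infinite sequences, i.e., its
inverse is well-founded. -/
def TerminatingRel {α : Type} (r : α → α → Prop) : Prop :=
  WellFounded (fun a b => r b a)

/-- One step of `A` relative to `B`: `→B* · →A · →B*`. -/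
def RelStep {F V : Type} (A B : Set (Rule F V)) (s t : Tm F V) : Prop :=
  ∃ s' t', Steps B s s' ∧ Step A s' t' ∧ Steps B t' t

/-- Relative termination of `A/B`. -/
def RelTerminating {F V : Type} (A B : Set (Rule F V)) : Prop :=
  TerminatingRel (RelStep A B)

/-- The signature of the order-sorted counterexample. -/
inductive S19 : Type
  | f | g | h | e | i | c | a | b

/-- The sort attachment on function symbols: argument sorts and result sort. -/
def sig19 : S19 → List (Fin 4) × Fin 4
  | S19.f => ([0], 2)
  | S19.g => ([2], 2)
  | S19.h => ([1, 0], 2)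
  | S19.e => ([0], 1)
  | S19.i => ([2, 2], 3)
  | S19.c => ([], 1)
  | S19.a => ([], 3)
  | S19.b => ([], 3)

/-- Sorts of variables: infinitely many variables of each of the four sorts. -/
def vsort19 (n : Nat) : Fin 4 := ⟨n % 4, by omega⟩

/-- The sort precedence `≽`: reflexive, and `1 ≽ 0`. -/
def geq19 (α β : Fin 4) : Prop := α = β ∨ (α = 1 ∧ β = 0)

/-- Order-sorted terms of a given sort. -/
inductive OSort : Tm S19 Nat → Fin 4 → Prop
  | var (x : Nat) : OSort (Tm.var x) (vsort19 x)
  | app (f : S19) (ts : List (Tm S19 Nat)) (βs : List (Fin 4)) :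
      List.Forall₂ OSort ts βs → List.Forall₂ geq19 (sig19 f).1 βs →
      OSort (Tm.app f ts) (sig19 f).2

/-- The variable `x` of sort 0. -/
def vx : Tm S19 Nat := Tm.var 0
/-- The variable `y` of sort 2. -/
def vy : Tm S19 Nat := Tm.var 2

/-- The TRS of the counterexample:
`f(x) → h(e(x),x)`, `h(c,x) → g(f(x))`, `e(x) → x`, `i(y,y) → a`, `i(y,g(y)) → b`. -/
def R19 : Set (Rule S19 Nat) :=
  { ⟨Tm.app S19.f [vx], Tm.app S19.h [Tm.app S19.e [vx], vx]⟩,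
    ⟨Tm.app S19.h [Tm.app S19.c [], vx], Tm.app S19.g [Tm.app S19.f [vx]]⟩,
    ⟨Tm.app S19.e [vx], vx⟩,
    ⟨Tm.app S19.i [vy, vy], Tm.app S19.a []⟩,
    ⟨Tm.app S19.i [vy, Tm.app S19.g [vy]], Tm.app S19.b []⟩ }

/-- The term `i(f(c), f(c))`. -/
def peakTm : Tm S19 Nat :=
  Tm.app S19.i [Tm.app S19.f [Tm.app S19.c []], Tm.app S19.f [Tm.app S19.c []]]


namespace List

variable {α β γ : Type*} {R : α → β → Prop} {S : β → γ → Prop}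

theorem forall₂_comp_iff {l₁ : List α} {l₃ : List γ} :
    Forall₂ (Relation.Comp R S) l₁ l₃ ↔ ∃ l₂, Forall₂ R l₁ l₂ ∧ Forall₂ S l₂ l₃ := by
  constructor
  · intro h
    induction h with
    | nil => exact ⟨[], .nil, .nil⟩
    | cons hac _ ih =>
      obtain ⟨b, hab, hbc⟩ := hac
      obtain ⟨l₂, h₁, h₂⟩ := ih
      exact ⟨b :: l₂, .cons hab h₁, .cons hbc h₂⟩
  · rintro ⟨l₂, h₁, h₂⟩
    induction h₁ generalizing l₃ with
    | nil => cases h₂; exact .nil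
    | cons hab _ ih =>
      cases h₂ with
      | cons hbc h₂ => exact .cons ⟨_, hab, hbc⟩ (ih h₂)

theorem Forall₂.exists_of_mem_left {l₁ : List α} {l₂ : List β} {a : α} (h : Forall₂ R l₁ l₂)
    (ha : a ∈ l₁) : ∃ b, R a b := by
  induction h with
  | nil => cases ha
  | cons hab _ ih =>
    rcases mem_cons.1 ha with rfl | ha
    · exact ⟨_, hab⟩
    · exact ih ha

theorem Forall₂.set_left {l₁ : List α} {l₂ : List β} {i : ℕ} {a a' : α} (h : Forall₂ R l₁ l₂)
    (ha : l₁[i]? = some a) (hR : ∀ b, R a b → R a' b) : Forall₂ R (l₁.set i a') l₂ := by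
  induction h generalizing i with
  | nil => simp at ha
  | cons hab h ih =>
    cases i with
    | zero => cases ha; exact .cons (hR _ hab) h
    | succ i => exact .cons hab (ih ha)

end List

namespace Tm

variable {F V : Type}

theorem subst_app (σ : V → Tm F V) (f : F) (ts : List (Tm F V)) :
    subst σ (app f ts) = app f (ts.map (subst σ)) := by
  rw [subst]; simp

theorem ne_app_of_mem {t : Tm F V} {f : F} {ts : List (Tm F V)} (h : t ∈ ts) :
    t ≠ app f ts := by
  intro heq
  have := List.sizeOf_lt_of_mem h
  rw [heq, app.sizeOf_spec] at this
  omega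

end Tm

open Tm

section Rewriting

variable {F V : Type} {R : Set (Rule F V)}

theorem Step.root {ρ : Rule F V} (hρ : ρ ∈ R) (σ : V → Tm F V) :
    Step R (subst σ ρ.lhs) (subst σ ρ.rhs) :=
  ⟨ρ, hρ, [], σ, rfl, rfl⟩

theorem Step.congr {f : F} {ts : List (Tm F V)} {i : ℕ} {u u' : Tm F V}
    (hi : ts[i]? = some u) (h : Step R u u') : Step R (app f ts) (app f (ts.set i u')) := by
  obtain ⟨ρ, hρ, p, σ, hsub, rfl⟩ := h
  exact ⟨ρ, hρ, i :: p, σ, by simp [sub, hi, hsub], by simp [repl, hi]⟩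

theorem Step.induction_on {P : Tm F V → Tm F V → Prop} {s t : Tm F V} (h : Step R s t)
    (root : ∀ ρ ∈ R, ∀ σ, P (subst σ ρ.lhs) (subst σ ρ.rhs))
    (congr : ∀ f ts i u u', ts[i]? = some u → Step R u u' → P u u' →
      P (app f ts) (app f (ts.set i u'))) : P s t := by
  obtain ⟨ρ, hρ, p, σ, hsub, rfl⟩ := h
  induction p generalizing s with
  | nil => cases hsub; exact root ρ hρ σ
  | cons i p ih =>
    cases s with
    | var x => cases hsub
    | app f ts =>
      cases hi : ts[i]? with
      | none => simp [sub, hi] at hsub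
      | some u =>
        simp only [sub, hi, Option.bind_some] at hsub
        simp only [repl, hi]
        exact congr f ts i u _ hi ⟨ρ, hρ, p, σ, hsub, rfl⟩ (ih hsub)

theorem Step.arg {f : F} (pre post : List (Tm F V)) {u u' : Tm F V} (h : Step R u u') :
    Step R (app f (pre ++ u :: post)) (app f (pre ++ u' :: post)) := by
  simpa using Step.congr (f := f) (ts := pre ++ u :: post) (i := pre.length) (by simp) h

theorem Steps.arg {f : F} (pre post : List (Tm F V)) {u u' : Tm F V} (h : Steps R u u') :
    Steps R (app f (pre ++ u :: post)) (app f (pre ++ u' :: post)) :=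
  h.lift (fun v => app f (pre ++ v :: post)) fun _ _ => Step.arg pre post

theorem Steps.app_map {f : F} {g : Tm F V → Tm F V} {ts : List (Tm F V)}
    (h : ∀ t ∈ ts, Steps R t (g t)) : Steps R (app f ts) (app f (ts.map g)) := by
  suffices ∀ pre, Steps R (app f (pre ++ ts)) (app f (pre ++ ts.map g)) by simpa using this []
  induction ts with
  | nil => intro pre; simpa using .refl
  | cons t ts ih =>
    intro pre
    have rest := ih (fun t ht => h t (List.mem_cons_of_mem _ ht)) (pre ++ [g t])
    simp only [List.append_assoc, List.singleton_append] at rest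
    exact (Steps.arg pre ts (h t List.mem_cons_self)).trans rest

theorem Steps.eq_of_normal {a v : Tm F V} (h : Steps R a v) (ha : ∀ u, ¬ Step R a u) : v = a := by
  rcases h.cases_head with rfl | ⟨w, hw, _⟩
  · rfl
  · exact absurd hw (ha w)

theorem confluentOn_of_nf {T : Set (Tm F V)} (nf : Tm F V → Tm F V)
    (steps_nf : ∀ t, Steps R t (nf t)) (mapsTo : ∀ s ∈ T, ∀ t, Step R s t → t ∈ T)
    (nf_eq : ∀ s ∈ T, ∀ t, Step R s t → nf s = nf t) : ConfluentOn R T := by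
  have invariant : ∀ {s t}, s ∈ T → Steps R s t → t ∈ T ∧ nf t = nf s := by
    intro s t hs h
    induction h with
    | refl => exact ⟨hs, rfl⟩
    | tail _ hst ih => exact ⟨mapsTo _ ih.1 _ hst, (nf_eq _ ih.1 _ hst).symm.trans ih.2⟩
  intro s hs t u ht hu
  exact ⟨nf s, (invariant hs ht).2 ▸ steps_nf t, (invariant hs hu).2 ▸ steps_nf u⟩

theorem not_confluent_of_peak {s a b : Tm F V} (ha : Steps R s a) (hb : Steps R s b)
    (hab : a ≠ b) (ha_normal : ∀ u, ¬ Step R a u) (hb_normal : ∀ u, ¬ Step R b u) :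
    ¬ Confluent R := by
  intro hconf
  obtain ⟨v, hav, hbv⟩ := hconf s trivial a b ha hb
  exact hab ((hav.eq_of_normal ha_normal).symm.trans (hbv.eq_of_normal hb_normal))

end Rewriting

theorem geq19_trans {α β γ : Fin 4} (h₁ : geq19 α β) (h₂ : geq19 β γ) : geq19 α γ := by
  unfold geq19 at *; omega

def OSortBelow (t : Tm S19 Nat) (γ : Fin 4) : Prop := ∃ β, OSort t β ∧ geq19 γ β

theorem OSortBelow.mono {t : Tm S19 Nat} {β γ : Fin 4} (h : OSortBelow t β)
    (hγ : geq19 γ β) : OSortBelow t γ :=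
  let ⟨δ, hδ, hβ⟩ := h; ⟨δ, hδ, geq19_trans hγ hβ⟩

@[simp] theorem osortBelow_zero {t : Tm S19 Nat} : OSortBelow t 0 ↔ OSort t 0 := by
  simp [OSortBelow, geq19]

theorem OSort.app_iff {fn : S19} {ts : List (Tm S19 Nat)} {α : Fin 4} :
    OSort (Tm.app fn ts) α ↔ α = (sig19 fn).2 ∧ List.Forall₂ OSortBelow ts (sig19 fn).1 := by
  rw [show List.Forall₂ OSortBelow ts (sig19 fn).1 ↔ ∃ βs, List.Forall₂ OSort ts βs ∧
    List.Forall₂ (flip geq19) βs (sig19 fn).1 from List.forall₂_comp_iff]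
  constructor
  · intro h
    cases h with
    | app _ _ βs h₁ h₂ => exact ⟨rfl, βs, h₁, h₂.flip⟩
  · rintro ⟨rfl, βs, h₁, h₂⟩
    exact .app fn ts βs h₁ h₂.flip

theorem OSort.eq_var_of_zero {t : Tm S19 Nat} (h : OSort t 0) : ∃ x, t = Tm.var x := by
  cases t with
  | var x => exact ⟨x, rfl⟩
  | app fn ts => cases fn <;> simp [OSort.app_iff, sig19] at h

namespace R19

inductive RootStep : Tm S19 Nat → Tm S19 Nat → Prop
  | f (u) : RootStep (app .f [u]) (app .h [app .e [u], u])
  | hc (u) : RootStep (app .h [app .c [], u]) (app .g [app .f [u]])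
  | e (u) : RootStep (app .e [u]) u
  | i_self (u) : RootStep (app .i [u, u]) (app .a [])
  | i_g (u) : RootStep (app .i [u, app .g [u]]) (app .b [])

theorem RootStep.of_mem {ρ : Rule S19 Nat} (hρ : ρ ∈ R19) (σ : ℕ → Tm S19 Nat) :
    RootStep (subst σ ρ.lhs) (subst σ ρ.rhs) := by
  rcases hρ with rfl | rfl | rfl | rfl | rfl <;> simp only [subst_app, List.map, vx, vy, subst]
  · exact .f _
  · exact .hc _
  · exact .e _
  · exact .i_self _
  · exact .i_g _

theorem RootStep.step : ∀ {s t : Tm S19 Nat}, RootStep s t → Step R19 s t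
  | _, _, .f u => by
    simpa [subst_app, subst, vx] using Step.root (R := R19) (.inl rfl) fun _ => u
  | _, _, .hc u => by
    simpa [subst_app, subst, vx] using Step.root (R := R19) (.inr (.inl rfl)) fun _ => u
  | _, _, .e u => by
    simpa [subst_app, subst, vx] using Step.root (R := R19) (.inr (.inr (.inl rfl))) fun _ => u
  | _, _, .i_self u => by
    simpa [subst_app, subst, vy] using
      Step.root (R := R19) (.inr (.inr (.inr (.inl rfl)))) fun _ => u
  | _, _, .i_g u => by
    simpa [subst_app, subst, vy] using
      Step.root (R := R19) (.inr (.inr (.inr (.inr rfl)))) fun _ => u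

theorem step_induction {P : Tm S19 Nat → Tm S19 Nat → Prop} {s t : Tm S19 Nat}
    (h : Step R19 s t) (root : ∀ {s t}, RootStep s t → P s t)
    (congr : ∀ fn ts i u u', ts[i]? = some u → Step R19 u u' → P u u' →
      P (app fn ts) (app fn (ts.set i u'))) : P s t :=
  h.induction_on (fun _ hρ σ => root (RootStep.of_mem hρ σ)) congr

theorem not_step_app_nil (fn : S19) (u : Tm S19 Nat) : ¬ Step R19 (app fn []) u := by
  suffices ∀ {s t}, Step R19 s t → ∀ fn, s ≠ app fn [] from fun h => this h fn rfl
  intro s t h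
  refine step_induction (P := fun s _ => ∀ fn, s ≠ app fn []) h ?_ ?_
  · intro s t hst
    cases hst <;> simp
  · rintro _ ts i _ _ hi _ _ _ ⟨⟩
    simp at hi

theorem steps_f (t : Tm S19 Nat) : Steps R19 (app .f [t]) (app .h [t, t]) :=
  .tail (.single (RootStep.f t).step) ((RootStep.e t).step.arg [] [t])

theorem steps_peakTm_a : Steps R19 peakTm (app .a []) :=
  .single (RootStep.i_self _).step

theorem steps_peakTm_b : Steps R19 peakTm (app .b []) :=
  .tail (.tail ((steps_f _).arg [_] []) ((RootStep.hc _).step.arg [_] [])) (RootStep.i_g _).step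

theorem RootStep.osortBelow {s t : Tm S19 Nat} {α : Fin 4} :
    RootStep s t → OSort s α → OSortBelow t α
  | .e u, hs => by
    obtain ⟨rfl, hu⟩ : α = 1 ∧ OSort u 0 := by simpa [OSort.app_iff, sig19] using hs
    exact ⟨0, hu, .inr ⟨rfl, rfl⟩⟩
  | .f _, hs | .hc _, hs | .i_self _, hs | .i_g _, hs => by
    simp_all [OSort.app_iff, sig19, OSortBelow, geq19]

theorem osortBelow_of_step {s t : Tm S19 Nat} {α : Fin 4} (hs : OSort s α)
    (h : Step R19 s t) : OSortBelow t α := by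
  refine step_induction (P := fun s t => ∀ α, OSort s α → OSortBelow t α) h
    (fun hst _ => hst.osortBelow) ?_ α hs
  intro fn ts i u u' hi _ ih α hs
  rw [OSort.app_iff] at hs
  refine ⟨α, OSort.app_iff.2 ⟨hs.1, hs.2.set_left hi fun γ ⟨β, hu, hγβ⟩ => ?_⟩, Or.inl rfl⟩
  exact (ih β hu).mono hγβ

-- On unsorted terms `nf` need not be normal: `nf (f(c)) = h(c,c)`.
open Classical in
noncomputable def nfRoot : S19 → List (Tm S19 Nat) → Tm S19 Nat
  | .e, [t] => t
  | .f, [t] => app .h [t, t]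
  | .h, [s, t] => if s = app .c [] then app .g [app .h [t, t]] else app .h [s, t]
  | .i, [s, t] =>
    if s = t then app .a [] else if t = app .g [s] then app .b [] else app .i [s, t]
  | fn, ts => app fn ts

noncomputable def nf : Tm S19 Nat → Tm S19 Nat
  | var x => var x
  | app fn ts => nfRoot fn (ts.attach.map fun ⟨t, _⟩ => nf t)
  decreasing_by simp only [app.sizeOf_spec]; have := List.sizeOf_lt_of_mem ‹_›; omega

@[simp] theorem nf_var (x : ℕ) : nf (var x) = var x := by
  rw [nf]

theorem nf_app (fn : S19) (ts : List (Tm S19 Nat)) : nf (app fn ts) = nfRoot fn (ts.map nf) := by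
  rw [nf]; simp

theorem steps_nfRoot (fn : S19) (us : List (Tm S19 Nat)) :
    Steps R19 (app fn us) (nfRoot fn us) := by
  unfold nfRoot
  split
  · exact .single (RootStep.e _).step
  · exact steps_f _
  · split_ifs with hs
    · subst hs
      exact .head (RootStep.hc _).step ((steps_f _).arg [] [])
    · exact .refl
  · split_ifs with hst hg
    · subst hst; exact .single (RootStep.i_self _).step
    · subst hg; exact .single (RootStep.i_g _).step
    · exact .refl
  · exact .refl

theorem steps_nf : ∀ t : Tm S19 Nat, Steps R19 t (nf t)
  | var x => by rw [nf_var]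
  | app fn ts => by
    rw [nf_app]
    exact (Steps.app_map fun t _ => steps_nf t).trans (steps_nfRoot fn _)

theorem RootStep.nf_eq {s t : Tm S19 Nat} {α : Fin 4} : RootStep s t → OSort s α → nf s = nf t
  | .f u, hs => by
    have hu : α = 2 ∧ OSort u 0 := by simpa [OSort.app_iff, sig19] using hs
    obtain ⟨x, rfl⟩ := hu.2.eq_var_of_zero
    simp [nf_app, nfRoot]
  | .i_g u, _ => by simp [nf_app, nfRoot, ne_app_of_mem]
  | .hc _, _ | .e _, _ | .i_self _, _ => by simp [nf_app, nfRoot]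

theorem nf_eq_of_step {s t : Tm S19 Nat} {α : Fin 4} (hs : OSort s α) (h : Step R19 s t) :
    nf s = nf t := by
  refine step_induction (P := fun s t => ∀ α, OSort s α → nf s = nf t) h
    (fun hst _ => hst.nf_eq) ?_ α hs
  intro fn ts i u u' hi _ ih α hs
  obtain ⟨γ, β, hu, -⟩ := (OSort.app_iff.1 hs).2.exists_of_mem_left (List.mem_of_getElem? hi)
  have hts : ts.set i u = ts := by
    obtain ⟨hlt, rfl⟩ := List.getElem?_eq_some_iff.1 hi
    exact List.set_getElem_self hlt
  rw [nf_app, nf_app, ← hts, List.set_set, List.map_set, List.map_set, ih β hu]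

theorem confluentOn_osort : ConfluentOn R19 {t | ∃ α, OSort t α} :=
  confluentOn_of_nf nf steps_nf
    (fun _ ⟨_, hs⟩ _ h => let ⟨β, ht, _⟩ := osortBelow_of_step hs h; ⟨β, ht⟩)
    fun _ ⟨_, hs⟩ _ h => nf_eq_of_step hs h

end R19

/-- `R19` is confluent on order-sorted terms, but not confluent
on all terms: `a ←* i(f(c),f(c)) →* b` for the distinct normal forms `a`, `b`. -/
theorem order_sorted_counterexample :
    ConfluentOn R19 {t : Tm S19 Nat | ∃ α : Fin 4, OSort t α} ∧
    Steps R19 peakTm (Tm.app S19.a []) ∧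
    Steps R19 peakTm (Tm.app S19.b []) ∧
    (∀ u, ¬ Step R19 (Tm.app S19.a []) u) ∧
    (∀ u, ¬ Step R19 (Tm.app S19.b []) u) ∧
    (Tm.app S19.a [] : Tm S19 Nat) ≠ Tm.app S19.b [] ∧
    ¬ Confluent R19 := by
  have hab : (Tm.app S19.a [] : Tm S19 Nat) ≠ Tm.app S19.b [] := by simp
  have ha_normal := R19.not_step_app_nil S19.a
  have hb_normal := R19.not_step_app_nil S19.b
  exact ⟨R19.confluentOn_osort, R19.steps_peakTm_a, R19.steps_peakTm_b, ha_normal, hb_normal, hab,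
    not_confluent_of_peak R19.steps_peakTm_a R19.steps_peakTm_b hab ha_normal hb_normal⟩
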